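/- Let u ~ N(ū, Σ_u) be a Gaussian random vector on ℝ^{N_u} with N_u ∈ {1, 2} and Σ_u positive definite, let u_max > 0, and let ρ = √(λ_max(Σ_u)). If ‖ū‖₂ ≤ u_max, then 1 − P(‖u‖₂ ≤ u_max) ≤ exp(−(1/2)·((‖ū‖₂ − u_max)/ρ)²). -/

import Mathlib

open MeasureTheory ProbabilityTheory Matrix Real

noncomputable def mvGaussian {d : ℕ} (m : Fin d → ℝ) (S : Matrix (Fin d) (Fin d) ℝ)
    (hS : S.PosDef) : Measure (Fin d → ℝ) :=
  (Measure.pi fun _ : Fin d => gaussianReal 0 1).map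
    (fun z => m + (hS.posSemidef.1.eigenvectorUnitary.1 *
      diagonal ((√·) ∘ hS.posSemidef.1.eigenvalues) *
      (star hS.posSemidef.1.eigenvectorUnitary : Matrix (Fin d) (Fin d) ℝ)).mulVec z)

noncomputable def stdNormalCDF (x : ℝ) : ℝ := cdf (gaussianReal 0 1) x

noncomputable def stdNormalQuantile (p : ℝ) : ℝ := Function.invFun stdNormalCDF p

noncomputable def chiSqCDF (d : ℕ) (x : ℝ) : ℝ := cdf (gammaMeasure (d / 2) (1 / 2)) x

noncomputable def chiSqQuantile (d : ℕ) (p : ℝ) : ℝ := Function.invFun (chiSqCDF d) p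

noncomputable def PsiInv (d : ℕ) (β : ℝ) : ℝ := Real.sqrt (chiSqQuantile d (1 - β))

noncomputable def Psi (d : ℕ) (r : ℝ) : ℝ := 1 - chiSqCDF d (r ^ 2)

noncomputable def lambdaMax {d : ℕ} (S : Matrix (Fin d) (Fin d) ℝ) (hS : S.IsHermitian) : ℝ :=
  ⨆ i, hS.eigenvalues i

noncomputable def regIncBeta (a b x : ℝ) : ℝ :=
  (∫ t in (0:ℝ)..x, t ^ (a - 1) * (1 - t) ^ (b - 1)) /
    (∫ t in (0:ℝ)..1, t ^ (a - 1) * (1 - t) ^ (b - 1))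

noncomputable def calI (d : ℕ) (x : ℝ) : ℝ :=
  regIncBeta ((d - 1 : ℝ) / 2) (1 / 2) (Real.sqrt (1 - x))

/-!
Write `u = ū + A z` with `z` standard Gaussian and `A` the symmetric square root of `Σ_u`.
Since `‖A z‖ ≤ ρ ‖z‖`, the event `‖u‖ > u_max` forces `‖z‖ ≥ t := (u_max - ‖ū‖) / ρ ≥ 0`, so it
suffices that `P(‖z‖ ≥ t) ≤ exp(-t² / 2)`. In the plane this is an equality, because in polar
coordinates `‖z‖` has the Rayleigh density `r exp(-r² / 2)`. On the line, two independent copies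
give `P(|z| ≥ t)² ≤ P(‖(z, z')‖ ≥ √2 t) = exp(-t²)`.
-/

open Set

section Spectral

variable {n : Type*} [Fintype n]

lemma norm_toLp_sq (v : n → ℝ) : ‖WithLp.toLp 2 v‖ ^ 2 = v ⬝ᵥ v := by
  rw [EuclideanSpace.norm_eq, sq_sqrt (by positivity)]
  simp [dotProduct, sq]

lemma sqrt_sum_sq_eq_norm_toLp (v : n → ℝ) : √(∑ i, v i ^ 2) = ‖WithLp.toLp 2 v‖ := by
  simp [EuclideanSpace.norm_eq]

variable [DecidableEq n]

lemma dotProduct_self_mulVec_of_mem_unitaryGroup {U : Matrix n n ℝ}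
    (hU : U ∈ unitaryGroup n ℝ) (x : n → ℝ) : (U *ᵥ x) ⬝ᵥ (U *ᵥ x) = x ⬝ᵥ x := by
  have hUU : Uᵀ * U = 1 := by
    rw [← conjTranspose_eq_transpose_of_trivial, ← star_eq_conjTranspose]
    exact mem_unitaryGroup_iff'.mp hU
  rw [dotProduct_mulVec, ← vecMul_transpose, vecMul_vecMul, hUU, vecMul_one]

lemma dotProduct_self_diagonal_mulVec_le {d : n → ℝ} {c : ℝ} (hd : ∀ i, d i ^ 2 ≤ c)
    (w : n → ℝ) : (diagonal d *ᵥ w) ⬝ᵥ (diagonal d *ᵥ w) ≤ c * (w ⬝ᵥ w) := by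
  simp only [mulVec_diagonal, dotProduct, Finset.mul_sum]
  refine Finset.sum_le_sum fun i _ => ?_
  nlinarith [hd i, mul_self_nonneg (w i)]

end Spectral

noncomputable def posDefSqrt {d : ℕ} (S : Matrix (Fin d) (Fin d) ℝ) (hS : S.PosDef) :
    Matrix (Fin d) (Fin d) ℝ :=
  hS.posSemidef.1.eigenvectorUnitary.1 *
      diagonal ((√·) ∘ hS.posSemidef.1.eigenvalues) *
      (star hS.posSemidef.1.eigenvectorUnitary : Matrix (Fin d) (Fin d) ℝ)

lemma mvGaussian_eq_map {d : ℕ} (m : Fin d → ℝ) (S : Matrix (Fin d) (Fin d) ℝ)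
    (hS : S.PosDef) : mvGaussian m S hS =
      (Measure.pi fun _ : Fin d => gaussianReal 0 1).map (fun z => m + posDefSqrt S hS *ᵥ z) :=
  rfl

instance {d : ℕ} (m : Fin d → ℝ) (S : Matrix (Fin d) (Fin d) ℝ) (hS : S.PosDef) :
    IsProbabilityMeasure (mvGaussian m S hS) :=
  Measure.isProbabilityMeasure_map (by fun_prop)

lemma eigenvalues_le_lambdaMax {d : ℕ} {S : Matrix (Fin d) (Fin d) ℝ} (hS : S.IsHermitian)
    (i : Fin d) : hS.eigenvalues i ≤ lambdaMax S hS :=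
  le_ciSup (finite_range _).bddAbove i

lemma lambdaMax_pos {d : ℕ} [NeZero d] {S : Matrix (Fin d) (Fin d) ℝ} (hS : S.PosDef) :
    0 < lambdaMax S hS.1 :=
  (hS.eigenvalues_pos 0).trans_le (eigenvalues_le_lambdaMax hS.1 0)

lemma dotProduct_self_posDefSqrt_mulVec_le {d : ℕ} {S : Matrix (Fin d) (Fin d) ℝ}
    (hS : S.PosDef) (z : Fin d → ℝ) :
    (posDefSqrt S hS *ᵥ z) ⬝ᵥ (posDefSqrt S hS *ᵥ z) ≤ lambdaMax S hS.1 * (z ⬝ᵥ z) := by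
  set U := hS.posSemidef.1.eigenvectorUnitary
  have hsqrt (i : Fin d) : ((√·) ∘ hS.posSemidef.1.eigenvalues) i ^ 2 ≤ lambdaMax S hS.1 := by
    rw [Function.comp_apply, sq_sqrt (hS.posSemidef.eigenvalues_nonneg i)]
    exact eigenvalues_le_lambdaMax hS.1 i
  rw [posDefSqrt, ← mulVec_mulVec, ← mulVec_mulVec,
    dotProduct_self_mulVec_of_mem_unitaryGroup U.2,
    ← dotProduct_self_mulVec_of_mem_unitaryGroup (Unitary.star_mem U.2) z]
  exact dotProduct_self_diagonal_mulVec_le hsqrt _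

lemma norm_toLp_posDefSqrt_mulVec_le {d : ℕ} {S : Matrix (Fin d) (Fin d) ℝ}
    (hS : S.PosDef) (z : Fin d → ℝ) :
    ‖WithLp.toLp 2 (posDefSqrt S hS *ᵥ z)‖ ≤ √(lambdaMax S hS.1) * ‖WithLp.toLp 2 z‖ := by
  rw [← sqrt_sq (norm_nonneg (WithLp.toLp 2 z)), ← sqrt_mul' _ (sq_nonneg _),
    ← sqrt_sq (norm_nonneg _), norm_toLp_sq, norm_toLp_sq]
  exact sqrt_le_sqrt (dotProduct_self_posDefSqrt_mulVec_le hS z)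

lemma sqrt_sum_sq_add_posDefSqrt_mulVec_le {d : ℕ} {S : Matrix (Fin d) (Fin d) ℝ}
    (hS : S.PosDef) (m z : Fin d → ℝ) :
    √(∑ i, (m + posDefSqrt S hS *ᵥ z) i ^ 2) ≤
      √(∑ i, m i ^ 2) + √(lambdaMax S hS.1) * √(∑ i, z i ^ 2) := by
  simp only [sqrt_sum_sq_eq_norm_toLp, WithLp.toLp_add]
  exact (norm_add_le _ _).trans (add_le_add_right (norm_toLp_posDefSqrt_mulVec_le hS z) _)

lemma sqrt_polarCoord_symm (p : ℝ × ℝ) :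
    √((polarCoord.symm p).1 ^ 2 + (polarCoord.symm p).2 ^ 2) = |p.1| := by
  rw [polarCoord_symm_apply, mul_pow, mul_pow, ← mul_add, cos_sq_add_sin_sq, mul_one,
    sqrt_sq_eq_abs]

lemma integral_comp_sqrt_sq_add_sq (g : ℝ → ℝ) :
    ∫ p : ℝ × ℝ, g √(p.1 ^ 2 + p.2 ^ 2) = 2 * π * ∫ r in Ioi 0, r * g r := by
  rw [← integral_comp_polarCoord_symm, polarCoord_target, Measure.volume_eq_prod]
  have hpolar : ∀ p ∈ Ioi (0 : ℝ) ×ˢ Ioo (-π) π,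
      p.1 • g √((polarCoord.symm p).1 ^ 2 + (polarCoord.symm p).2 ^ 2) = p.1 * g p.1 * 1 := by
    rintro p ⟨hr, -⟩
    rw [sqrt_polarCoord_symm, abs_of_pos hr, smul_eq_mul, mul_one]
  rw [setIntegral_congr_fun (measurableSet_Ioi.prod measurableSet_Ioo) hpolar,
    setIntegral_prod_mul (fun r => r * g r) (fun _ => (1 : ℝ))]
  rw [integral_const, measureReal_restrict_apply MeasurableSet.univ, univ_inter, volume_real_Ioo,
    sub_neg_eq_add, max_eq_left (by positivity), smul_eq_mul, mul_one]
  ring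

lemma gaussianPDFReal_mul_gaussianPDFReal (x y : ℝ) :
    gaussianPDFReal 0 1 x * gaussianPDFReal 0 1 y =
      (2 * π)⁻¹ * exp (-√(x ^ 2 + y ^ 2) ^ 2 / 2) := by
  simp only [gaussianPDFReal, NNReal.coe_one, mul_one, sub_zero]
  rw [mul_mul_mul_comm, ← mul_inv, mul_self_sqrt (by positivity), ← exp_add,
    sq_sqrt (by positivity)]
  ring_nf

lemma integral_gaussianReal_prod_comp_sqrt (g : ℝ → ℝ) :
    ∫ p, g √(p.1 ^ 2 + p.2 ^ 2) ∂(gaussianReal 0 1).prod (gaussianReal 0 1) =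
      ∫ r in Ioi 0, r * exp (-r ^ 2 / 2) * g r := by
  have hdensity (p : ℝ × ℝ) : (gaussianPDF 0 1 p.1 * gaussianPDF 0 1 p.2).toReal =
      (2 * π)⁻¹ * exp (-√(p.1 ^ 2 + p.2 ^ 2) ^ 2 / 2) := by
    rw [gaussianPDF, gaussianPDF, ← ENNReal.ofReal_mul (gaussianPDFReal_nonneg _ _ _),
      ENNReal.toReal_ofReal
        (mul_nonneg (gaussianPDFReal_nonneg _ _ _) (gaussianPDFReal_nonneg _ _ _)),
      gaussianPDFReal_mul_gaussianPDFReal]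
  rw [gaussianReal_of_var_ne_zero 0 one_ne_zero, prod_withDensity (measurable_gaussianPDF 0 1)
    (measurable_gaussianPDF 0 1), ← Measure.volume_eq_prod,
    integral_withDensity_eq_integral_toReal_smul (by fun_prop)
      (.of_forall fun _ => ENNReal.mul_lt_top (by simp [gaussianPDF]) (by simp [gaussianPDF]))]
  simp_rw [hdensity, smul_eq_mul]
  rw [integral_comp_sqrt_sq_add_sq (fun r => (2 * π)⁻¹ * exp (-r ^ 2 / 2) * g r),
    ← integral_const_mul]
  congr 1 with r
  field_simp

lemma integral_Ioi_mul_exp_neg_sq_div_two (s : ℝ) :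
    ∫ r in Ioi s, r * exp (-r ^ 2 / 2) = exp (-s ^ 2 / 2) := by
  have hderiv (x : ℝ) : HasDerivAt (fun r => -exp (-r ^ 2 / 2)) (x * exp (-x ^ 2 / 2)) x :=
    (((hasDerivAt_pow 2 x).neg.div_const 2).exp).neg.congr_deriv (by simp; ring)
  have hint : IntegrableOn (fun r => r * exp (-r ^ 2 / 2)) (Ioi s) := by
    refine (integrable_mul_exp_neg_mul_sq (b := 1 / 2) (by norm_num)).integrableOn.congr_fun
      (fun r _ => ?_) measurableSet_Ioi
    dsimp only
    ring_nf
  have hlim : Filter.Tendsto (fun r => -exp (-r ^ 2 / 2)) Filter.atTop (nhds 0) := by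
    have h : Filter.Tendsto (fun r : ℝ => -r ^ 2 / 2) Filter.atTop Filter.atBot :=
      (Filter.tendsto_neg_atTop_atBot.comp
        (Filter.tendsto_pow_atTop two_ne_zero)).atBot_div_const two_pos
    simpa using (tendsto_exp_atBot.comp h).neg
  rw [integral_Ioi_of_hasDerivAt_of_tendsto (by fun_prop) (fun x _ => hderiv x) hint hlim]
  ring

lemma gaussianReal_prod_real_setOf_le_sqrt {s : ℝ} (hs : 0 ≤ s) :
    ((gaussianReal 0 1).prod (gaussianReal 0 1)).real {p | s ≤ √(p.1 ^ 2 + p.2 ^ 2)} =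
      exp (-s ^ 2 / 2) := by
  have hindicator : {p : ℝ × ℝ | s ≤ √(p.1 ^ 2 + p.2 ^ 2)}.indicator (1 : ℝ × ℝ → ℝ) =
      fun p => (Ici s).indicator (1 : ℝ → ℝ) √(p.1 ^ 2 + p.2 ^ 2) := by
    ext p
    simp only [indicator, mem_ofPred_eq, mem_Ici, Pi.one_apply]
  have hIoi : (Ioi 0 ∩ Ici s : Set ℝ) =ᵐ[volume] (Ioi s : Set ℝ) := by
    refine (Ioi_ae_eq_Ici.inter (Filter.EventuallyEq.refl _ _)).trans ?_
    rw [Ici_inter_Ici, max_eq_right hs]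
    exact Ioi_ae_eq_Ici.symm
  rw [← integral_indicator_one (measurableSet_le measurable_const (by fun_prop)), hindicator,
    integral_gaussianReal_prod_comp_sqrt]
  have hweight (r : ℝ) : r * exp (-r ^ 2 / 2) * (Ici s).indicator 1 r =
      (Ici s).indicator (fun r => r * exp (-r ^ 2 / 2)) r := by
    simp [indicator_apply]
  simp_rw [hweight]
  rw [setIntegral_indicator measurableSet_Ici, setIntegral_congr_set hIoi,
    integral_Ioi_mul_exp_neg_sq_div_two]

lemma gaussianReal_real_setOf_le_abs_le {s : ℝ} (hs : 0 ≤ s) :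
    (gaussianReal 0 1).real {x | s ≤ |x|} ≤ exp (-s ^ 2 / 2) := by
  set A := {x : ℝ | s ≤ |x|}
  have hsub : A ×ˢ A ⊆ {p : ℝ × ℝ | √2 * s ≤ √(p.1 ^ 2 + p.2 ^ 2)} := by
    rintro ⟨x, y⟩ ⟨hx, hy⟩
    have hx2 : s ^ 2 ≤ x ^ 2 := sq_abs x ▸ pow_le_pow_left₀ hs hx 2
    have hy2 : s ^ 2 ≤ y ^ 2 := sq_abs y ▸ pow_le_pow_left₀ hs hy 2
    rw [mem_ofPred_eq, ← sqrt_sq hs, ← sqrt_mul zero_le_two]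
    exact sqrt_le_sqrt (by linarith)
  have hsq : (gaussianReal 0 1).real A ^ 2 ≤ exp (-s ^ 2 / 2) ^ 2 := by
    calc (gaussianReal 0 1).real A ^ 2
        = ((gaussianReal 0 1).prod (gaussianReal 0 1)).real (A ×ˢ A) := by
          rw [measureReal_prod_prod, sq]
      _ ≤ exp (-(√2 * s) ^ 2 / 2) := by
          rw [← gaussianReal_prod_real_setOf_le_sqrt (by positivity)]
          exact measureReal_mono hsub
      _ = exp (-s ^ 2 / 2) ^ 2 := by
          rw [← exp_nat_mul, mul_pow, sq_sqrt zero_le_two]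
          ring_nf
  exact (pow_le_pow_iff_left₀ measureReal_nonneg (exp_nonneg _) two_ne_zero).mp hsq

lemma gaussianReal_pi_real_setOf_le_sqrt_le {d : ℕ} (hd : d = 1 ∨ d = 2) {s : ℝ} (hs : 0 ≤ s) :
    (Measure.pi fun _ : Fin d => gaussianReal 0 1).real {z | s ≤ √(∑ i, z i ^ 2)} ≤
      exp (-s ^ 2 / 2) := by
  rcases hd with rfl | rfl
  · -- ascribed so that `Measure.pi` uses the goal's `Fintype (Fin 1)` instance
    have hmp : MeasurePreserving (MeasurableEquiv.funUnique (Fin 1) ℝ)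
        (Measure.pi fun _ : Fin 1 => gaussianReal 0 1) (gaussianReal 0 1) :=
      measurePreserving_funUnique _ _
    have hpre : MeasurableEquiv.funUnique (Fin 1) ℝ ⁻¹' {x | s ≤ |x|} =
        {z : Fin 1 → ℝ | s ≤ √(∑ i, z i ^ 2)} := by
      ext z
      simp [MeasurableEquiv.funUnique, sqrt_sq_eq_abs]
    rw [← hpre, ← map_measureReal_apply hmp.measurable
      (measurableSet_le measurable_const continuous_abs.measurable), hmp.map_eq]
    exact gaussianReal_real_setOf_le_abs_le hs
  · have hmp := measurePreserving_finTwoArrow (gaussianReal 0 1)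
    have hpre : MeasurableEquiv.finTwoArrow ⁻¹' {p : ℝ × ℝ | s ≤ √(p.1 ^ 2 + p.2 ^ 2)} =
        {z : Fin 2 → ℝ | s ≤ √(∑ i, z i ^ 2)} := by
      ext z
      simp [MeasurableEquiv.finTwoArrow, Fin.sum_univ_two]
    rw [← hpre, ← map_measureReal_apply hmp.measurable
      (measurableSet_le measurable_const (by fun_prop)), hmp.map_eq]
    exact (gaussianReal_prod_real_setOf_le_sqrt hs).le

theorem stmt19_general {Nu : ℕ} (hN : Nu = 1 ∨ Nu = 2) (ubar : Fin Nu → ℝ)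
    (Su : Matrix (Fin Nu) (Fin Nu) ℝ) (hSu : Su.PosDef) (umax : ℝ)
    (hm : Real.sqrt (∑ i, ubar i ^ 2) ≤ umax) :
    1 - ((mvGaussian ubar Su hSu) {v | Real.sqrt (∑ i, v i ^ 2) ≤ umax}).toReal
      ≤ Real.exp (-(1 / 2) * ((Real.sqrt (∑ i, ubar i ^ 2) - umax)
          / Real.sqrt (lambdaMax Su hSu.1)) ^ 2) := by
  have : NeZero Nu := ⟨by omega⟩
  set ρ := √(lambdaMax Su hSu.1)
  have hρ : 0 < ρ := sqrt_pos.2 (lambdaMax_pos hSu)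
  have hball : MeasurableSet {v : Fin Nu → ℝ | √(∑ i, v i ^ 2) ≤ umax} :=
    measurableSet_le (by fun_prop) measurable_const
  have hsub : (fun z => ubar + posDefSqrt Su hSu *ᵥ z) ⁻¹' {v | √(∑ i, v i ^ 2) ≤ umax}ᶜ ⊆
      {z | (umax - √(∑ i, ubar i ^ 2)) / ρ ≤ √(∑ i, z i ^ 2)} := by
    intro z hz
    rw [mem_ofPred_eq, div_le_iff₀ hρ]
    linarith [not_le.mp (show ¬_ ≤ umax from hz), sqrt_sum_sq_add_posDefSqrt_mulVec_le hSu ubar z]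
  rw [← measureReal_def, ← probReal_compl_eq_one_sub hball, mvGaussian_eq_map,
    map_measureReal_apply (by fun_prop) hball.compl]
  calc _ ≤ _ := measureReal_mono hsub
    _ ≤ exp (-((umax - √(∑ i, ubar i ^ 2)) / ρ) ^ 2 / 2) :=
      gaussianReal_pi_real_setOf_le_sqrt_le hN (div_nonneg (sub_nonneg.2 hm) hρ.le)
    _ = _ := by ring_nf

theorem stmt19 {Nu : ℕ} (hN : Nu = 1 ∨ Nu = 2) (ubar : Fin Nu → ℝ)
    (Su : Matrix (Fin Nu) (Fin Nu) ℝ) (hSu : Su.PosDef) (umax : ℝ) (humax : 0 < umax)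
    (hm : Real.sqrt (∑ i, ubar i ^ 2) ≤ umax) :
    1 - ((mvGaussian ubar Su hSu) {v | Real.sqrt (∑ i, v i ^ 2) ≤ umax}).toReal
      ≤ Real.exp (-(1 / 2) * ((Real.sqrt (∑ i, ubar i ^ 2) - umax)
          / Real.sqrt (lambdaMax Su hSu.1)) ^ 2) :=
  stmt19_general hN ubar Su hSu umax hm
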